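/- For x, y ∈ ℝ, the one-dimensional straddle encodings satisfy ‖|str_ν(x)⟩ − |str_ν(y)⟩‖ ≤ (π/(2ν))·|x − y|. -/

import Mathlib

/-- The one-dimensional straddle encoding of `x ∈ ℝ` with grid size `ν`, as an element
of `ℓ²(ℤ)`: `cos(π t/2)|k⟩ + sin(π t/2)|k+1⟩` with `k = ⌊x/ν⌋` and `t = x/ν − k`. -/
noncomputable def str (ν x : ℝ) : lp (fun _ : ℤ => ℝ) 2 :=
  Real.cos (Real.pi / 2 * Int.fract (x / ν)) • lp.single 2 ⌊x / ν⌋ (1 : ℝ)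
    + Real.sin (Real.pi / 2 * Int.fract (x / ν)) • lp.single 2 (⌊x / ν⌋ + 1) (1 : ℝ)

open Real RealInnerProductSpace

noncomputable def G (k : ℤ) (t : ℝ) : lp (fun _ : ℤ => ℝ) 2 :=
  Real.cos (Real.pi / 2 * t) • lp.single 2 k (1 : ℝ)
    + Real.sin (Real.pi / 2 * t) • lp.single 2 (k + 1) (1 : ℝ)

lemma inner_single_single (i j : ℤ) (a b : ℝ) :
    ⟪(lp.single 2 i a : lp (fun _ : ℤ => ℝ) 2), lp.single 2 j b⟫ = if i = j then a * b else 0 := by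
  rw [lp.inner_single_left, lp.single_apply]
  by_cases h : i = j <;> simp [h, RCLike.inner_apply] <;> ring

lemma norm_G_sub (k : ℤ) (s t : ℝ) :
    ‖G k s - G k t‖ ≤ Real.pi / 2 * |s - t| := by
  have hk : k ≠ k + 1 := by omega
  set A := Real.pi / 2 * s with hA
  set B := Real.pi / 2 * t with hB
  have hv : G k s - G k t =
      (Real.cos A - Real.cos B) • lp.single 2 k (1 : ℝ)
        + (Real.sin A - Real.sin B) • lp.single 2 (k + 1) (1 : ℝ) := by
    simp only [G, sub_smul]
    abel
  have hnorm : ‖G k s - G k t‖ ^ 2 = 2 - 2 * Real.cos (A - B) := by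
    rw [← real_inner_self_eq_norm_sq, hv, inner_add_add_self]
    simp only [real_inner_smul_left, real_inner_smul_right,
      inner_single_single, if_pos rfl, if_neg hk, if_neg (Ne.symm hk)]
    norm_num
    rw [Real.cos_sub]
    nlinarith [Real.sin_sq_add_cos_sq A, Real.sin_sq_add_cos_sq B]
  have h2 : ‖G k s - G k t‖ = 2 * |Real.sin ((A - B) / 2)| := by
    rw [Real.abs_sin_half, ← abs_norm, ← Real.sqrt_sq_eq_abs, hnorm,
      show (2 : ℝ) - 2 * Real.cos (A - B) = 4 * ((1 - Real.cos (A - B)) / 2) by ring,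
      Real.sqrt_mul (by norm_num),
      show Real.sqrt 4 = 2 by
        rw [show (4:ℝ) = 2^2 by norm_num, Real.sqrt_sq]; norm_num]
  rw [h2]
  have h3 : |Real.sin ((A - B) / 2)| ≤ |(A - B) / 2| := Real.abs_sin_le_abs
  have h4 : |(A - B) / 2| = Real.pi / 4 * |s - t| := by
    rw [show (A - B) / 2 = Real.pi / 4 * (s - t) by rw [hA, hB]; ring,
      abs_mul, abs_of_nonneg (by positivity : (0:ℝ) ≤ Real.pi / 4)]
  nlinarith [abs_nonneg ((A-B)/2)]

noncomputable def g (a : ℝ) : lp (fun _ : ℤ => ℝ) 2 := G ⌊a⌋ (Int.fract a)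

lemma g_int_add_one (k : ℤ) : g ((k : ℝ) + 1) = G k 1 := by
  unfold g
  rw [show ((k:ℝ) + 1) = ((k + 1 : ℤ) : ℝ) by push_cast; ring,
    Int.floor_intCast, Int.fract_intCast]
  unfold G
  simp

lemma key : ∀ n : ℕ, ∀ a b : ℝ, a ≤ b → ⌊b⌋ = ⌊a⌋ + n →
    ‖g a - g b‖ ≤ Real.pi / 2 * (b - a)
  | 0 => fun a b hab hfl => by
    simp only [Nat.cast_zero, add_zero] at hfl
    have h : g a - g b = G ⌊a⌋ (Int.fract a) - G ⌊a⌋ (Int.fract b) := by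
      unfold g; rw [hfl]
    rw [h]
    have := norm_G_sub ⌊a⌋ (Int.fract a) (Int.fract b)
    have hfr : Int.fract a - Int.fract b = a - b := by
      unfold Int.fract; rw [hfl]; ring
    rw [hfr, abs_of_nonpos (by linarith)] at this
    linarith
  | (n+1) => fun a b hab hfl => by
    set c : ℝ := (⌊a⌋ : ℝ) + 1 with hc
    have hfa := Int.fract_nonneg a
    have hfa' := Int.fract_lt_one a
    have hfrac : Int.fract a = a - ⌊a⌋ := Int.self_sub_floor a ▸ rfl
    have h1 : ‖g a - g c‖ ≤ Real.pi / 2 * (c - a) := by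
      have : g a - g c = G ⌊a⌋ (Int.fract a) - G ⌊a⌋ 1 := by
        rw [g_int_add_one]; rfl
      rw [this]
      have := norm_G_sub ⌊a⌋ (Int.fract a) 1
      rw [abs_of_nonpos (by linarith)] at this
      have : ‖G ⌊a⌋ (Int.fract a) - G ⌊a⌋ 1‖ ≤ Real.pi / 2 * (1 - Int.fract a) := by
        linarith
      rw [hfrac] at this
      calc ‖G ⌊a⌋ (Int.fract a) - G ⌊a⌋ 1‖ ≤ Real.pi / 2 * (1 - (a - ⌊a⌋)) := this
        _ = Real.pi / 2 * (c - a) := by rw [hc]; ring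
    have hcb : c ≤ b := by
      have h1 : (⌊a⌋ : ℝ) + 1 ≤ (⌊b⌋ : ℝ) := by
        have : ⌊a⌋ + 1 ≤ ⌊b⌋ := by omega
        exact_mod_cast this
      have := Int.floor_le b
      linarith
    have hfc : ⌊c⌋ = ⌊a⌋ + 1 := by
      rw [hc, show ((⌊a⌋:ℝ) + 1) = ((⌊a⌋ + 1 : ℤ) : ℝ) by push_cast; ring,
        Int.floor_intCast]
    have h2 : ‖g c - g b‖ ≤ Real.pi / 2 * (b - c) := by
      apply key n c b hcb
      rw [hfc]; omega
    calc ‖g a - g b‖ ≤ ‖g a - g c‖ + ‖g c - g b‖ := by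
          have := norm_sub_le_norm_sub_add_norm_sub (g a) (g c) (g b)
          exact this
      _ ≤ Real.pi / 2 * (c - a) + Real.pi / 2 * (b - c) := add_le_add h1 h2
      _ = Real.pi / 2 * (b - a) := by ring

lemma g_lip (a b : ℝ) : ‖g a - g b‖ ≤ Real.pi / 2 * |a - b| := by
  rcases le_total a b with h | h
  · have hle : ⌊a⌋ ≤ ⌊b⌋ := Int.floor_le_floor h
    have : ⌊b⌋ = ⌊a⌋ + ((⌊b⌋ - ⌊a⌋).toNat : ℤ) := by omega
    have := key (⌊b⌋ - ⌊a⌋).toNat a b h (by exact_mod_cast this)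
    rw [abs_of_nonpos (by linarith)]
    linarith
  · have hle : ⌊b⌋ ≤ ⌊a⌋ := Int.floor_le_floor h
    have heq : ⌊a⌋ = ⌊b⌋ + ((⌊a⌋ - ⌊b⌋).toNat : ℤ) := by omega
    have := key (⌊a⌋ - ⌊b⌋).toNat b a h (by exact_mod_cast heq)
    rw [norm_sub_rev, abs_of_nonneg (by linarith)]
    linarith


/-- Lipschitz bound: `‖|str_ν(x)⟩ − |str_ν(y)⟩‖ ≤ (π/(2ν))·|x − y|`. -/
theorem stmt5 (ν x y : ℝ) (hν : 0 < ν) :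
    ‖str ν x - str ν y‖ ≤ Real.pi / (2 * ν) * |x - y| := by
  have h1 : str ν x = g (x / ν) := rfl
  have h2 : str ν y = g (y / ν) := rfl
  rw [h1, h2]
  have := g_lip (x / ν) (y / ν)
  have habs : |x / ν - y / ν| = |x - y| / ν := by
    rw [div_sub_div_same, abs_div, abs_of_pos hν]
  rw [habs] at this
  calc ‖g (x/ν) - g (y/ν)‖ ≤ Real.pi / 2 * (|x - y| / ν) := this
    _ = Real.pi / (2 * ν) * |x - y| := by field_simp
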